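/- arXiv:1610.07729 — 9 statements merged into one kernel-verified Lean document; each statement's English description precedes it below -/
import Mathlib

section
/- A function f : (V → Fin (k+1)) → ℝ is k-submodular if and only if f is both orthant submodular and pairwise monotone. -/
variable {V : Type*} [Fintype V] [DecidableEq V] {k : ℕ}

/-- Pointwise meet: `(x ⊓ y)(e) = x(e)` if `x(e) = y(e)`, and `0` otherwise. -/
def kinf (x y : V → Fin (k+1)) : V → Fin (k+1) :=
  fun e => if x e = y e then x e else 0

/-- Pointwise join: `(x ⊔ y)(e) = x(e)` if `y(e) = 0` or `y(e) = x(e)`;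
`(x ⊔ y)(e) = y(e)` if `x(e) = 0`; and `0` if `x(e), y(e)` are distinct nonzero values. -/
def ksup (x y : V → Fin (k+1)) : V → Fin (k+1) :=
  fun e => if y e = 0 ∨ y e = x e then x e else if x e = 0 then y e else 0

/-- `f` is `k`-submodular if `f(x) + f(y) ≥ f(x ⊓ y) + f(x ⊔ y)` for all `x, y`. -/
def KSubmodular (f : (V → Fin (k+1)) → ℝ) : Prop :=
  ∀ x y, f (kinf x y) + f (ksup x y) ≤ f x + f y

/-- The partial order: `x ⪯ y` iff for every `e`, `x(e) = 0` or `x(e) = y(e)`. -/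
def KPrec (x y : V → Fin (k+1)) : Prop := ∀ e, x e = 0 ∨ x e = y e

/-- Orthant submodularity: `Δ_{e,i} f(x) ≥ Δ_{e,i} f(y)` whenever `x ⪯ y`, `y(e) = 0`
and `i ∈ {1,…,k}`, where `Δ_{e,i} f(x) = f(x_{e,i}) − f(x)`. -/
def OrthantSubmodular (f : (V → Fin (k+1)) → ℝ) : Prop :=
  ∀ x y (e : V) (i : Fin (k+1)), KPrec x y → y e = 0 → i ≠ 0 →
    f (Function.update y e i) - f y ≤ f (Function.update x e i) - f x

/-- Pairwise monotonicity: `Δ_{e,i} f(x) + Δ_{e,j} f(x) ≥ 0` whenever `x(e) = 0`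
and `i, j ∈ {1,…,k}` with `i ≠ j`. -/
def PairwiseMonotone (f : (V → Fin (k+1)) → ℝ) : Prop :=
  ∀ x (e : V) (i j : Fin (k+1)), x e = 0 → i ≠ 0 → j ≠ 0 → i ≠ j →
    0 ≤ (f (Function.update x e i) - f x) + (f (Function.update x e j) - f x)

/-- Monotonicity: `x ⪯ y` implies `f(x) ≤ f(y)`. -/
def KMonotone (f : (V → Fin (k+1)) → ℝ) : Prop :=
  ∀ x y, KPrec x y → f x ≤ f y

-- auxiliary lemmas, inserted before the theorem

lemma kinf_self (x : V → Fin (k+1)) : kinf x x = x := by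
  funext e; simp [kinf]

lemma ksup_self (x : V → Fin (k+1)) : ksup x x = x := by
  funext e; simp [ksup]

lemma kprec_kinf_left (x y : V → Fin (k+1)) : KPrec (kinf x y) x := by
  intro e; unfold kinf; split
  · right; rfl
  · left; rfl

lemma kinf_apply_ne (x y : V → Fin (k+1)) (e : V) (h : x e ≠ y e) : kinf x y e = 0 := by
  simp [kinf, h]

lemma ksup_apply_both (x y : V → Fin (k+1)) (e : V) (hx : x e ≠ 0) (hy : y e ≠ 0)
    (h : x e ≠ y e) : ksup x y e = 0 := by
  unfold ksup
  rw [if_neg, if_neg hx]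
  push_neg
  exact ⟨hy, fun h' => h h'.symm⟩

lemma kinf_update_left (x y : V → Fin (k+1)) (e : V) :
    kinf (Function.update x e (y e)) y = Function.update (kinf x y) e (y e) := by
  funext e'
  rcases eq_or_ne e' e with rfl | h
  · simp [kinf]
  · simp [kinf, Function.update_of_ne h]

lemma ksup_update_left (x y : V → Fin (k+1)) (e : V) :
    ksup (Function.update x e (y e)) y = Function.update (ksup x y) e (y e) := by
  funext e'
  rcases eq_or_ne e' e with rfl | h
  · simp [ksup]
  · simp [ksup, Function.update_of_ne h]

lemma kinf_update_right (x y : V → Fin (k+1)) (e : V) :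
    kinf x (Function.update y e (x e)) = Function.update (kinf x y) e (x e) := by
  funext e'
  rcases eq_or_ne e' e with rfl | h
  · simp [kinf]
  · simp [kinf, Function.update_of_ne h]

lemma ksup_update_right (x y : V → Fin (k+1)) (e : V) :
    ksup x (Function.update y e (x e)) = Function.update (ksup x y) e (x e) := by
  funext e'
  rcases eq_or_ne e' e with rfl | h
  · simp [ksup]
  · simp [ksup, Function.update_of_ne h]

lemma diff_update_left (x y : V → Fin (k+1)) (e : V) :
    (Finset.univ.filter fun e' => Function.update x e (y e) e' ≠ y e')
      = (Finset.univ.filter fun e' => x e' ≠ y e').erase e := by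
  ext e'
  rcases eq_or_ne e' e with rfl | h
  · simp
  · simp [Finset.mem_erase, h, Function.update_of_ne h]

lemma diff_update_right (x y : V → Fin (k+1)) (e : V) :
    (Finset.univ.filter fun e' => x e' ≠ Function.update y e (x e) e')
      = (Finset.univ.filter fun e' => x e' ≠ y e').erase e := by
  ext e'
  rcases eq_or_ne e' e with rfl | h
  · simp
  · simp [Finset.mem_erase, h, Function.update_of_ne h]

lemma kinf_fwd1 (x y : V → Fin (k+1)) (e : V) (i : Fin (k+1)) (hprec : KPrec x y)
    (hy : y e = 0) (hi : i ≠ 0) : kinf (Function.update x e i) y = x := by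
  have hxe : x e = 0 := by
    rcases hprec e with h | h
    · exact h
    · exact h.trans hy
  funext e'
  rcases eq_or_ne e' e with rfl | h
  · unfold kinf
    rw [Function.update_self, hy, if_neg hi, hxe]
  · unfold kinf
    rw [Function.update_of_ne h]
    rcases hprec e' with h0 | hxy'
    · rcases eq_or_ne (x e') (y e') with hc | hc
      · rw [if_pos hc]
      · rw [if_neg hc, h0]
    · rw [if_pos hxy']

lemma ksup_fwd1 (x y : V → Fin (k+1)) (e : V) (i : Fin (k+1)) (hprec : KPrec x y)
    (hy : y e = 0) : ksup (Function.update x e i) y = Function.update y e i := by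
  funext e'
  rcases eq_or_ne e' e with rfl | h
  · unfold ksup
    rw [Function.update_self, Function.update_self, if_pos (Or.inl hy)]
  · rw [Function.update_of_ne h]
    unfold ksup
    rw [Function.update_of_ne h]
    rcases hprec e' with h0 | hxy'
    · rcases eq_or_ne (y e') 0 with hy' | hy'
      · rw [if_pos (Or.inl hy'), h0, hy']
      · rw [if_neg, if_pos h0]
        push_neg
        exact ⟨hy', fun hc => hy' (hc.trans h0)⟩
    · rw [if_pos (Or.inr hxy'.symm), hxy']

lemma kinf_fwd2 (x : V → Fin (k+1)) (e : V) (i j : Fin (k+1)) (hx : x e = 0)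
    (hij : i ≠ j) : kinf (Function.update x e i) (Function.update x e j) = x := by
  funext e'
  rcases eq_or_ne e' e with rfl | h
  · unfold kinf
    rw [Function.update_self, Function.update_self, if_neg hij, hx]
  · unfold kinf
    rw [Function.update_of_ne h, Function.update_of_ne h, if_pos rfl]

lemma ksup_fwd2 (x : V → Fin (k+1)) (e : V) (i j : Fin (k+1)) (hx : x e = 0)
    (hi : i ≠ 0) (hj : j ≠ 0) (hij : i ≠ j) :
    ksup (Function.update x e i) (Function.update x e j) = x := by
  funext e'
  rcases eq_or_ne e' e with rfl | h
  · unfold ksup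
    rw [Function.update_self, Function.update_self, if_neg, if_neg hi, hx]
    push_neg
    exact ⟨hj, fun hc => hij hc.symm⟩
  · unfold ksup
    rw [Function.update_of_ne h, Function.update_of_ne h, if_pos (Or.inr rfl)]

lemma key_reverse (f : (V → Fin (k+1)) → ℝ) (ho : OrthantSubmodular f)
    (hp : PairwiseMonotone f) :
    ∀ (n : ℕ) (x y : V → Fin (k+1)),
      (Finset.univ.filter fun e' => x e' ≠ y e').card ≤ n →
      f (kinf x y) + f (ksup x y) ≤ f x + f y := by
  intro n
  induction n with
  | zero =>
    intro x y hcard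
    have hxy : x = y := by
      funext e
      by_contra h
      have : e ∈ Finset.univ.filter fun e' => x e' ≠ y e' := by simp [h]
      have := Finset.card_pos.mpr ⟨e, this⟩
      omega
    subst hxy
    rw [kinf_self, ksup_self]
  | succ n ih =>
    intro x y hcard
    by_cases hB : ∃ e, x e = 0 ∧ y e ≠ 0
    · obtain ⟨e, hx0, hy0⟩ := hB
      have hne : x e ≠ y e := by rw [hx0]; exact fun h => hy0 h.symm
      have hmem : e ∈ Finset.univ.filter fun e' => x e' ≠ y e' := by simp [hne]
      have hcard' : ((Finset.univ.filter fun e' => x e' ≠ y e').erase e).card ≤ n := by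
        rw [Finset.card_erase_of_mem hmem]
        omega
      have hIH := ih (Function.update x e (y e)) y (by rw [diff_update_left]; exact hcard')
      rw [kinf_update_left, ksup_update_left] at hIH
      -- orthant: kinf x y ⪯ x, x e = 0
      have horth := ho (kinf x y) x e (y e) (kprec_kinf_left x y) hx0 hy0
      -- ksup x y e = y e, so the update on ksup is trivial
      have hts : ksup x y e = y e := by
        unfold ksup
        rw [if_neg, if_pos hx0]
        push_neg
        exact ⟨hy0, fun h => hne h.symm⟩
      rw [show Function.update (ksup x y) e (y e) = ksup x y by
        rw [← hts]; exact Function.update_eq_self e _] at hIH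
      linarith
    · by_cases hA : ∃ e, x e ≠ 0 ∧ y e = 0
      · obtain ⟨e, hx0, hy0⟩ := hA
        have hne : x e ≠ y e := by rw [hy0]; exact hx0
        have hmem : e ∈ Finset.univ.filter fun e' => x e' ≠ y e' := by simp [hne]
        have hcard' : ((Finset.univ.filter fun e' => x e' ≠ y e').erase e).card ≤ n := by
          rw [Finset.card_erase_of_mem hmem]
          omega
        have hIH := ih x (Function.update y e (x e)) (by rw [diff_update_right]; exact hcard')
        rw [kinf_update_right, ksup_update_right] at hIH
        have hprec : KPrec (kinf x y) y := by
          intro e'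
          unfold kinf
          split
          · next h => right; exact h
          · left; rfl
        have horth := ho (kinf x y) y e (x e) hprec hy0 hx0
        have hts : ksup x y e = x e := by
          unfold ksup
          rw [if_pos (Or.inl hy0)]
        rw [show Function.update (ksup x y) e (x e) = ksup x y by
          rw [← hts]; exact Function.update_eq_self e _] at hIH
        linarith
      · by_cases hxy : x = y
        · subst hxy; rw [kinf_self, ksup_self]
        · push_neg at hB hA
          obtain ⟨e, hne⟩ : ∃ e, x e ≠ y e := by
            by_contra h
            push_neg at h
            exact hxy (funext h)
          have hx0 : x e ≠ 0 := fun h => hne (h.trans (hB e h).symm)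
          have hy0 : y e ≠ 0 := fun h => (hA e hx0) h
          have hmem : e ∈ Finset.univ.filter fun e' => x e' ≠ y e' := by simp [hne]
          have hcard' : ((Finset.univ.filter fun e' => x e' ≠ y e').erase e).card ≤ n := by
            rw [Finset.card_erase_of_mem hmem]
            omega
          have hIH := ih (Function.update x e (y e)) y (by rw [diff_update_left]; exact hcard')
          rw [kinf_update_left, ksup_update_left] at hIH
          set x'' := Function.update x e 0 with hx''
          have hx''e : x'' e = 0 := Function.update_self e 0 x
          have hse : kinf x y e = 0 := kinf_apply_ne x y e hne
          have hte : ksup x y e = 0 := ksup_apply_both x y e hx0 hy0 hne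
          -- pairwise at x''
          have hpair := hp x'' e (x e) (y e) hx''e hx0 hy0 hne
          have hupdi : Function.update x'' e (x e) = x := by
            rw [hx'', Function.update_idem, Function.update_eq_self]
          have hupdj : Function.update x'' e (y e) = Function.update x e (y e) := by
            rw [hx'', Function.update_idem]
          rw [hupdi, hupdj] at hpair
          -- orthant: kinf x y ⪯ x''
          have hprecs : KPrec (kinf x y) x'' := by
            intro e'
            rcases eq_or_ne e' e with rfl | h
            · left; exact hse
            · rcases kprec_kinf_left x y e' with h0 | hxe
              · left; exact h0
              · right; rw [hxe, hx'', Function.update_of_ne h]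
          have horth1 := ho (kinf x y) x'' e (y e) hprecs hx''e hy0
          -- orthant: ksup x y ⪯ x''
          have hprect : KPrec (ksup x y) x'' := by
            intro e'
            rcases eq_or_ne e' e with rfl | h
            · left; exact hte
            · unfold ksup
              split
              · next hc => right; rw [hx'', Function.update_of_ne h]
              · split
                · next hc hxz => left; exact hB e' hxz
                · left; rfl
          have horth2 := ho (ksup x y) x'' e (y e) hprect hx''e hy0
          rw [hupdj] at horth1 horth2
          linarith

/-- A function `f : (V → Fin (k+1)) → ℝ` is `k`-submodular if and only if
`f` is both orthant submodular and pairwise monotone. -/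
theorem ksubmodular_iff_orthantSubmodular_and_pairwiseMonotone
    (hk : 1 ≤ k) (f : (V → Fin (k+1)) → ℝ) :
    KSubmodular f ↔ OrthantSubmodular f ∧ PairwiseMonotone f := by
  constructor
  · intro hf
    constructor
    · intro x y e i hprec hye hi
      have h := hf (Function.update x e i) y
      rw [kinf_fwd1 x y e i hprec hye hi, ksup_fwd1 x y e i hprec hye] at h
      linarith
    · intro x e i j hx hi hj hij
      have h := hf (Function.update x e i) (Function.update x e j)
      rw [kinf_fwd2 x e i j hx hij, ksup_fwd2 x e i j hx hi hj hij] at h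
      linarith
  · rintro ⟨ho, hp⟩ x y
    exact key_reverse f ho hp _ x y le_rfl
end

section
/- If f : (V → Fin (k+1)) → ℝ is orthant submodular and pairwise monotone, then f is k-submodular. -/
variable {V : Type*} [Fintype V] [DecidableEq V] {k : ℕ}

/-- If `x ⪯ y` then `x ⊓ y = x` and `x ⊔ y = y`. -/
lemma kinf_ksup_of_prec (x y : V → Fin (k+1)) (h : ∀ e, x e = 0 ∨ x e = y e) :
    kinf x y = x ∧ ksup x y = y := by
  constructor
  · funext e
    rcases h e with h0 | he
    · by_cases hxy : x e = y e <;> simp [kinf, hxy, h0]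
    · simp [kinf, he]
  · funext e
    rcases h e with h0 | he
    · by_cases hy : y e = 0 <;> simp [ksup, hy, h0]
    · by_cases hy : y e = 0
      · have hx0 : x e = 0 := he.trans hy
        simp [ksup, hy, hx0]
      · simp [ksup, ← he]

/-- No-conflict case: only orthant submodularity is needed. -/
lemma aux_noconflict (f : (V → Fin (k+1)) → ℝ) (hos : OrthantSubmodular f) :
    ∀ n : ℕ, ∀ x y : V → Fin (k+1),
      (∀ e, x e = 0 ∨ y e = 0 ∨ x e = y e) →
      (Finset.univ.filter (fun e => x e ≠ 0 ∧ y e = 0)).card ≤ n →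
      f (kinf x y) + f (ksup x y) ≤ f x + f y := by
  intro n
  induction n with
  | zero =>
    intro x y hconf hcard
    have hB : ∀ e, ¬ (x e ≠ 0 ∧ y e = 0) := by
      intro e he
      have : e ∈ Finset.univ.filter (fun e => x e ≠ 0 ∧ y e = 0) := by
        simp [he.1, he.2]
      have := Finset.card_pos.mpr ⟨e, this⟩
      omega
    have hprec : ∀ e, x e = 0 ∨ x e = y e := by
      intro e
      by_cases hx : x e = 0
      · exact Or.inl hx
      · rcases hconf e with h | h | h
        · exact absurd h hx
        · exact absurd ⟨hx, h⟩ (hB e)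
        · exact Or.inr h
    obtain ⟨h1, h2⟩ := kinf_ksup_of_prec x y hprec
    rw [h1, h2]
  | succ n ih =>
    intro x y hconf hcard
    by_cases hB : ∃ e, x e ≠ 0 ∧ y e = 0
    · obtain ⟨e, hxe, hye⟩ := hB
      set x' := Function.update x e 0 with hx'def
      set s := ksup x y with hsdef
      set s' := Function.update s e 0 with hs'def
      have hxe' : x' e = 0 := by simp [hx'def]
      have hupdx : Function.update x' e (x e) = x := by
        funext e'
        by_cases he' : e' = e
        · subst he'; simp [hx'def]
        · simp [hx'def, Function.update_apply, he']
      have hse : s e = x e := by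
        simp [hsdef, ksup, hye]
      have hupds : Function.update s' e (x e) = s := by
        funext e'
        by_cases he' : e' = e
        · subst he'; simp [hs'def, hse]
        · simp [hs'def, Function.update_apply, he']
      have h1 : kinf x' y = kinf x y := by
        funext e'
        by_cases he' : e' = e
        · subst he'
          simp [kinf, hx'def, hye, hxe]
        · simp [kinf, hx'def, Function.update_apply, he']
      have h2 : ksup x' y = s' := by
        funext e'
        by_cases he' : e' = e
        · subst he'
          simp [ksup, hs'def, hx'def, hye]
        · simp [ksup, hsdef, hs'def, hx'def, Function.update_apply, he']
      have hconf' : ∀ e', x' e' = 0 ∨ y e' = 0 ∨ x' e' = y e' := by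
        intro e'
        by_cases he' : e' = e
        · subst he'; exact Or.inl hxe'
        · simpa [hx'def, Function.update_apply, he'] using hconf e'
      have hcard' :
          (Finset.univ.filter (fun e' => x' e' ≠ 0 ∧ y e' = 0)).card ≤ n := by
        have hmem : e ∈ Finset.univ.filter (fun e' => x e' ≠ 0 ∧ y e' = 0) := by
          simp [hxe, hye]
        have hsub : (Finset.univ.filter (fun e' => x' e' ≠ 0 ∧ y e' = 0)) ⊆
            (Finset.univ.filter (fun e' => x e' ≠ 0 ∧ y e' = 0)).erase e := by
          intro e' he'
          simp only [Finset.mem_filter, Finset.mem_univ, true_and] at he'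
          have hne : e' ≠ e := by
            intro h; subst h; exact he'.1 hxe'
          refine Finset.mem_erase.mpr ⟨hne, ?_⟩
          simp only [Finset.mem_filter, Finset.mem_univ, true_and]
          simpa [hx'def, Function.update_apply, hne] using he'
        have := Finset.card_le_card hsub
        rw [Finset.card_erase_of_mem hmem] at this
        omega
      have hIH := ih x' y hconf' hcard'
      rw [h1, h2] at hIH
      -- orthant submodularity step
      have hprec : KPrec x' s' := by
        intro e'
        by_cases he' : e' = e
        · subst he'; exact Or.inl hxe'
        · by_cases hx0 : x e' = 0
          · left; simp [hx'def, Function.update_apply, he', hx0]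
          · right
            have hy' : y e' = 0 ∨ y e' = x e' := by
              rcases hconf e' with h | h | h
              · exact absurd h hx0
              · exact Or.inl h
              · exact Or.inr h.symm
            simp [hx'def, hs'def, hsdef, Function.update_apply, he', ksup, hy']
      have hs'e : s' e = 0 := by simp [hs'def]
      have ho := hos x' s' e (x e) hprec hs'e hxe
      rw [hupdx, hupds] at ho
      linarith
    · push_neg at hB
      have hprec : ∀ e, x e = 0 ∨ x e = y e := by
        intro e
        by_cases hx : x e = 0
        · exact Or.inl hx
        · rcases hconf e with h | h | h
          · exact absurd h hx
          · exact absurd h (hB e hx)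
          · exact Or.inr h
      obtain ⟨h1, h2⟩ := kinf_ksup_of_prec x y hprec
      rw [h1, h2]

lemma aux_main (f : (V → Fin (k+1)) → ℝ)
    (hos : OrthantSubmodular f) (hpm : PairwiseMonotone f) :
    ∀ n : ℕ, ∀ x y : V → Fin (k+1),
      (Finset.univ.filter (fun e => x e ≠ 0 ∧ y e ≠ 0 ∧ x e ≠ y e)).card ≤ n →
      f (kinf x y) + f (ksup x y) ≤ f x + f y := by
  intro n
  induction n with
  | zero =>
    intro x y hcard
    have hconf : ∀ e, x e = 0 ∨ y e = 0 ∨ x e = y e := by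
      intro e
      by_contra h
      push_neg at h
      have : e ∈ Finset.univ.filter (fun e => x e ≠ 0 ∧ y e ≠ 0 ∧ x e ≠ y e) := by
        simp [h.1, h.2.1, h.2.2]
      have := Finset.card_pos.mpr ⟨e, this⟩
      omega
    exact aux_noconflict f hos _ x y hconf le_rfl
  | succ n ih =>
    intro x y hcard
    by_cases hc : ∃ e, x e ≠ 0 ∧ y e ≠ 0 ∧ x e ≠ y e
    · obtain ⟨e, hxe, hye, hxy⟩ := hc
      set x' := Function.update x e 0 with hx'def
      set s := ksup x y with hsdef
      have hxe' : x' e = 0 := by simp [hx'def]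
      have hse : s e = 0 := by
        have hyx : y e ≠ x e := Ne.symm hxy
        simp [hsdef, ksup, hye, hyx, hxe]
      have hupdx : Function.update x' e (x e) = x := by
        funext e'
        by_cases he' : e' = e
        · subst he'; simp [hx'def]
        · simp [hx'def, Function.update_apply, he']
      have h0y : (0:Fin (k+1)) ≠ y e := Ne.symm hye
      have h1 : kinf x' y = kinf x y := by
        funext e'
        by_cases he' : e' = e
        · subst he'
          simp [kinf, hx'def, hxy, h0y]
        · simp [kinf, hx'def, Function.update_apply, he']
      have h2 : ksup x' y = Function.update s e (y e) := by
        funext e'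
        by_cases he' : e' = e
        · subst he'
          simp [ksup, hx'def, hye]
        · simp [ksup, hsdef, hx'def, Function.update_apply, he']
      have hcard' :
          (Finset.univ.filter (fun e' => x' e' ≠ 0 ∧ y e' ≠ 0 ∧ x' e' ≠ y e')).card ≤ n := by
        have hmem : e ∈ Finset.univ.filter (fun e' => x e' ≠ 0 ∧ y e' ≠ 0 ∧ x e' ≠ y e') := by
          simp [hxe, hye, hxy]
        have hsub : (Finset.univ.filter (fun e' => x' e' ≠ 0 ∧ y e' ≠ 0 ∧ x' e' ≠ y e')) ⊆
            (Finset.univ.filter (fun e' => x e' ≠ 0 ∧ y e' ≠ 0 ∧ x e' ≠ y e')).erase e := by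
          intro e' he'
          simp only [Finset.mem_filter, Finset.mem_univ, true_and] at he'
          have hne : e' ≠ e := by
            intro h; subst h; exact he'.1 hxe'
          refine Finset.mem_erase.mpr ⟨hne, ?_⟩
          simp only [Finset.mem_filter, Finset.mem_univ, true_and]
          simpa [hx'def, Function.update_apply, hne] using he'
        have := Finset.card_le_card hsub
        rw [Finset.card_erase_of_mem hmem] at this
        omega
      have hIH := ih x' y hcard'
      rw [h1, h2] at hIH
      -- common upper bound q of x' and s
      set q : V → Fin (k+1) := fun e' => if x' e' = 0 then s e' else x' e' with hqdef
      have hqe : q e = 0 := by simp [hqdef, hxe', hse]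
      have hprec1 : KPrec x' q := by
        intro e'
        by_cases h0 : x' e' = 0
        · exact Or.inl h0
        · right; simp [hqdef, h0]
      have hprec2 : KPrec s q := by
        intro e'
        by_cases h0 : x' e' = 0
        · right; simp [hqdef, h0]
        · by_cases he' : e' = e
          · subst he'; exact absurd hxe' h0
          · have hx0 : x e' ≠ 0 := by
              simpa [hx'def, Function.update_apply, he'] using h0
            have hx'x : x' e' = x e' := by
              simp [hx'def, Function.update_apply, he']
            by_cases hy' : y e' = 0 ∨ y e' = x e'
            · right
              simp [hqdef, h0, hx'x, hsdef, ksup, hy']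
            · left
              simp [hsdef, ksup, hy', hx0]
      have ho1 := hos x' q e (x e) hprec1 hqe hxe
      have ho2 := hos s q e (y e) hprec2 hqe hye
      have hpmq := hpm q e (x e) (y e) hqe hxe hye hxy
      rw [hupdx] at ho1
      linarith
    · push_neg at hc
      have hconf : ∀ e, x e = 0 ∨ y e = 0 ∨ x e = y e := by
        intro e
        by_cases hx : x e = 0
        · exact Or.inl hx
        · by_cases hy : y e = 0
          · exact Or.inr (Or.inl hy)
          · exact Or.inr (Or.inr (hc e hx hy))
      exact aux_noconflict f hos _ x y hconf le_rfl

/-- If `f` is orthant submodular and pairwise monotone, then `f` is `k`-submodular. -/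
theorem ksubmodular_of_orthantSubmodular_of_pairwiseMonotone
    (hk : 1 ≤ k) (f : (V → Fin (k+1)) → ℝ)
    (hos : OrthantSubmodular f) (hpm : PairwiseMonotone f) :
    KSubmodular f := by
  intro x y
  exact aux_main f hos hpm _ x y le_rfl
end

section
/- If f : (V → Fin (k+1)) → ℝ is monotone and orthant submodular, then f is k-submodular. -/
variable {V : Type*} [Fintype V] [DecidableEq V] {k : ℕ}

/-- If `f` is monotone and orthant submodular, then `f` is `k`-submodular. -/
theorem ksubmodular_of_monotone_of_orthantSubmodular
    (hk : 1 ≤ k) (f : (V → Fin (k+1)) → ℝ)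
    (hmono : KMonotone f) (hos : OrthantSubmodular f) :
    KSubmodular f := by
  suffices H : ∀ n (x y : V → Fin (k+1)),
      (Finset.univ.filter (fun e => x e ≠ y e)).card = n →
      f (kinf x y) + f (ksup x y) ≤ f x + f y by
    intro x y; exact H _ x y rfl
  intro n
  induction n with
  | zero =>
    intro x y h
    have hxy : x = y := by
      funext e
      by_contra hne
      have hmem : e ∈ Finset.univ.filter (fun e => x e ≠ y e) := by simp [hne]
      rw [Finset.card_eq_zero] at h
      simp [h] at hmem
    subst hxy
    have h1 : kinf x x = x := by funext e; simp [kinf]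
    have h2 : ksup x x = x := by funext e; simp [ksup]
    rw [h1, h2]
  | succ n ih =>
    intro x y h
    have hne : ∃ e, x e ≠ y e := by
      by_contra hc
      push_neg at hc
      have hfe : (Finset.univ.filter (fun e => x e ≠ y e)) = ∅ := by
        ext e; simp [hc]
      rw [hfe] at h; simp at h
    obtain ⟨e, he⟩ := hne
    have hemem : e ∈ Finset.univ.filter (fun e => x e ≠ y e) := by simp [he]
    have hcard : ∀ (x' y' : V → Fin (k+1)), x' e = y' e →
        (∀ e', e' ≠ e → x' e' = x e' ∧ y' e' = y e') →
        (Finset.univ.filter (fun e' => x' e' ≠ y' e')).card = n := by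
      intro x' y' heq hrest
      have hset : (Finset.univ.filter (fun e' => x' e' ≠ y' e')) =
          (Finset.univ.filter (fun e' => x e' ≠ y e')).erase e := by
        ext e'
        simp only [Finset.mem_erase, Finset.mem_filter, Finset.mem_univ, true_and]
        by_cases he' : e' = e
        · subst he'; simp [heq]
        · obtain ⟨h1, h2⟩ := hrest e' he'
          simp [h1, h2, he']
      rw [hset, Finset.card_erase_of_mem hemem, h]
      omega
    have hmprecx : KPrec (kinf x y) x := by
      intro e'
      by_cases hh : x e' = y e'
      · right; simp [kinf, hh]
      · left; simp [kinf, hh]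
    have hmprecy : KPrec (kinf x y) y := by
      intro e'
      by_cases hh : x e' = y e'
      · right; simp [kinf, hh]
      · left; simp [kinf, hh]
    by_cases hy0 : y e = 0
    · -- Case A: y e = 0, x e ≠ 0
      have hx0 : x e ≠ 0 := by rw [hy0] at he; exact he
      set y' := Function.update y e (x e) with hy'
      have hm0 : kinf x y e = 0 := by simp [kinf, he]
      have hm' : kinf x y' = Function.update (kinf x y) e (x e) := by
        funext e'
        by_cases he' : e' = e
        · subst he'; simp [kinf, hy', Function.update_self]
        · simp [kinf, hy', Function.update_of_ne he']
      have hs' : ksup x y' = ksup x y := by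
        funext e'
        by_cases he' : e' = e
        · subst he'; simp [ksup, hy', Function.update_self, hy0]
        · simp [ksup, hy', Function.update_of_ne he']
      have hih := ih x y' (hcard x y' (by simp [hy']) (by
        intro e' he'; exact ⟨rfl, by simp [hy', Function.update_of_ne he']⟩))
      rw [hm', hs'] at hih
      have hosij := hos (kinf x y) y e (x e) hmprecy hy0 hx0
      have hupd : Function.update (kinf x y) e (x e) = Function.update (kinf x y) e (x e) := rfl
      linarith
    · by_cases hx0 : x e = 0
      · -- Case B: x e = 0, y e ≠ 0
        have hy0' : y e ≠ 0 := hy0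
        set x' := Function.update x e (y e) with hx'
        have hm0 : kinf x y e = 0 := by simp [kinf, he]
        have hm' : kinf x' y = Function.update (kinf x y) e (y e) := by
          funext e'
          by_cases he' : e' = e
          · subst he'; simp [kinf, hx', Function.update_self]
          · simp [kinf, hx', Function.update_of_ne he']
        have hs' : ksup x' y = ksup x y := by
          funext e'
          by_cases he' : e' = e
          · subst he'
            have hyx : ¬ (y e' = x e') := fun hh => hy0' (hh.trans hx0)
            simp [ksup, hx', Function.update_self, hy0', hyx, hx0]
          · simp [ksup, hx', Function.update_of_ne he']
        have hih := ih x' y (hcard x' y (by simp [hx']) (by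
          intro e' he'; exact ⟨by simp [hx', Function.update_of_ne he'], rfl⟩))
        rw [hm', hs'] at hih
        have hosij := hos (kinf x y) x e (y e) hmprecx hx0 hy0'
        linarith
      · -- Case C: x e ≠ 0, y e ≠ 0, x e ≠ y e
        set x' := Function.update x e 0 with hx'
        set y' := Function.update y e 0 with hy'
        have hm' : kinf x' y' = kinf x y := by
          funext e'
          by_cases he' : e' = e
          · subst he'; simp [kinf, hx', hy', Function.update_self, he]
          · simp [kinf, hx', hy', Function.update_of_ne he']
        have hs' : ksup x' y' = ksup x y := by
          funext e'
          by_cases he' : e' = e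
          · subst he'
            have hyx : ¬ (y e' = x e') := fun hh => he hh.symm
            simp [ksup, hx', hy', Function.update_self, hy0, hyx, hx0]
          · simp [ksup, hx', hy', Function.update_of_ne he']
        have hih := ih x' y' (hcard x' y' (by simp [hx', hy']) (by
          intro e' he'
          exact ⟨by simp [hx', Function.update_of_ne he'],
                 by simp [hy', Function.update_of_ne he']⟩))
        rw [hm', hs'] at hih
        have hmx : f x' ≤ f x := by
          apply hmono
          intro e'
          by_cases he' : e' = e
          · subst he'; left; simp [hx']
          · right; simp [hx', Function.update_of_ne he']
        have hmy : f y' ≤ f y := by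
          apply hmono
          intro e'
          by_cases he' : e' = e
          · subst he'; left; simp [hy']
          · right; simp [hy', Function.update_of_ne he']
        linarith
end

section
/- Let f : (V → Fin (k+1)) → ℝ be monotone and k-submodular. Then for all x ⪯ y with y(e) = 0 and all i, i* ∈ {1,…,k}, one has Δ_{e,i*} f(y) − Δ_{e,i} f(y) ≤ Δ_{e,i*} f(x). -/
variable {V : Type*} [Fintype V] [DecidableEq V] {k : ℕ}

/-- Let `f` be monotone and `k`-submodular. Then for all `x ⪯ y` with `y(e) = 0`
and all `i, i* ∈ {1,…,k}`, `Δ_{e,i*} f(y) − Δ_{e,i} f(y) ≤ Δ_{e,i*} f(x)`. -/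
theorem delta_sub_delta_le_delta
    (hk : 1 ≤ k) (f : (V → Fin (k+1)) → ℝ)
    (hmono : KMonotone f) (hf : KSubmodular f)
    (x y : V → Fin (k+1)) (e : V) (hxy : KPrec x y) (hye : y e = 0)
    (i istar : Fin (k+1)) (hi : i ≠ 0) (histar : istar ≠ 0) :
    (f (Function.update y e istar) - f y) - (f (Function.update y e i) - f y) ≤
      f (Function.update x e istar) - f x := by
  have hxe : x e = 0 := by
    rcases hxy e with h | h
    · exact h
    · rw [h, hye]
  -- orthant submodularity for istar
  have horth : f x + f (Function.update y e istar) ≤ f (Function.update x e istar) + f y := by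
    have h := hf (Function.update x e istar) y
    have h1 : kinf (Function.update x e istar) y = x := by
      funext e'
      by_cases he : e' = e
      · subst he
        simp only [kinf, Function.update_self, hye, hxe]
        simp [histar]
      · simp only [kinf, Function.update_of_ne he]
        rcases hxy e' with h' | h'
        · simp [h']
        · simp [h']
    have h2 : ksup (Function.update x e istar) y = Function.update y e istar := by
      funext e'
      by_cases he : e' = e
      · subst he
        simp [ksup, hye]
      · simp only [ksup, Function.update_of_ne he]
        rcases hxy e' with h' | h'
        · by_cases hy' : y e' = 0
          · simp [h', hy']
          · have : ¬ (y e' = 0 ∨ y e' = x e') := by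
              rintro (h'' | h'')
              · exact hy' h''
              · exact hy' (h''.trans h')
            simp [this, h', hy']
        · simp [h'.symm]
    rw [h1, h2] at h
    linarith
  -- monotonicity
  have hmon : f y ≤ f (Function.update y e i) := by
    apply hmono
    intro e'
    by_cases he : e' = e
    · subst he; left; exact hye
    · right; rw [Function.update_of_ne he]
  linarith
end

section
/- Let k ≥ 1 and let y₁,…,y_k be nonnegative real numbers. Then for every l ∈ {1,…,k}: y_l · (∑_{i ≠ l} y_i^{k−1}) ≤ (1 − 1/k) · ∑_{i=1}^k y_i^k. -/
/-- Weighted AM-GM / Young: `k·(a·b^(k-1)) ≤ a^k + (k-1)·b^k` for nonnegative reals. -/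
lemma young_aux (k : ℕ) (hk : 1 ≤ k) (a b : ℝ) (ha : 0 ≤ a) (hb : 0 ≤ b) :
    (k : ℝ) * (a * b ^ (k - 1)) ≤ a ^ k + ((k : ℝ) - 1) * b ^ k := by
  rcases eq_or_lt_of_le hb with hb0 | hbpos
  · rcases eq_or_lt_of_le hk with hk1 | hk2
    · subst hb0
      simp [← hk1]
    · have hk1 : 1 ≤ k - 1 := by omega
      rw [← hb0, zero_pow (by omega : k - 1 ≠ 0), zero_pow (by omega : k ≠ 0)]
      have : (0:ℝ) ≤ a ^ k := pow_nonneg ha k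
      have : (0:ℝ) ≤ (k:ℝ) - 1 := by
        have : (1:ℝ) ≤ (k:ℝ) := by exact_mod_cast hk
        linarith
      nlinarith
  · -- b > 0, use Bernoulli: 1 + k*(a/b - 1) ≤ (a/b)^k
    have hber : 1 + (k:ℝ) * (a / b - 1) ≤ (1 + (a / b - 1)) ^ k := by
      apply one_add_mul_le_pow
      have : 0 ≤ a / b := div_nonneg ha hb
      linarith
    have hsimp : (1 + (a / b - 1)) ^ k = a ^ k / b ^ k := by
      rw [show 1 + (a / b - 1) = a / b by ring, div_pow]
    rw [hsimp] at hber
    have hbk : (0:ℝ) < b ^ k := pow_pos hbpos k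
    have h1 : (1 + (k:ℝ) * (a / b - 1)) * b ^ k ≤ a ^ k := by
      rw [← le_div_iff₀ hbk] at *
      exact hber
    have hbb : b ^ k = b * b ^ (k - 1) := by
      rw [← pow_succ']
      congr 1
      omega
    have h2 : a / b * b ^ k = a * b ^ (k - 1) := by
      rw [hbb]
      field_simp
    nlinarith [h1, h2]

/-- Let `k ≥ 1` and `y₁,…,y_k` be nonnegative reals. Then for every `l ∈ {1,…,k}`:
`y_l · (∑_{i ≠ l} y_i^{k−1}) ≤ (1 − 1/k) · ∑_{i=1}^k y_i^k`. -/
theorem power_distribution_inequality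
    (k : ℕ) (hk : 1 ≤ k) (y : Fin k → ℝ) (hy : ∀ i, 0 ≤ y i) (l : Fin k) :
    y l * ∑ i ∈ Finset.univ.erase l, (y i) ^ (k - 1) ≤
      (1 - 1 / (k : ℝ)) * ∑ i, (y i) ^ k := by
  set E := Finset.univ.erase l with hE
  have hcard : E.card = k - 1 := by
    rw [hE, Finset.card_erase_of_mem (Finset.mem_univ l)]
    simp
  have hsplit : ∑ i, (y i) ^ k = y l ^ k + ∑ i ∈ E, (y i) ^ k := by
    rw [hE, ← Finset.add_sum_erase _ _ (Finset.mem_univ l)]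
  have key : (k : ℝ) * (y l * ∑ i ∈ E, (y i) ^ (k - 1)) ≤
      ((k : ℝ) - 1) * ∑ i, (y i) ^ k := by
    have h1 : (k : ℝ) * (y l * ∑ i ∈ E, (y i) ^ (k - 1)) =
        ∑ i ∈ E, (k : ℝ) * (y l * (y i) ^ (k - 1)) := by
      rw [Finset.mul_sum, Finset.mul_sum]
    rw [h1]
    have h2 : ∑ i ∈ E, (k : ℝ) * (y l * (y i) ^ (k - 1)) ≤
        ∑ i ∈ E, (y l ^ k + ((k : ℝ) - 1) * (y i) ^ k) := by
      apply Finset.sum_le_sum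
      intro i _
      exact young_aux k hk (y l) (y i) (hy l) (hy i)
    refine h2.trans ?_
    rw [Finset.sum_add_distrib, Finset.sum_const, hcard, ← Finset.mul_sum, hsplit]
    have hcast : ((k - 1 : ℕ) : ℝ) = (k : ℝ) - 1 := by
      have : (1:ℕ) ≤ k := hk
      push_cast [Nat.cast_sub this]
      ring
    rw [nsmul_eq_mul, hcast]
    ring_nf
    exact le_rfl
  have hkpos : (0:ℝ) < (k:ℝ) := by exact_mod_cast hk
  have hT : (1 - 1 / (k : ℝ)) * ∑ i, (y i) ^ k =
      ((k : ℝ) - 1) * (∑ i, (y i) ^ k) / k := by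
    field_simp
  rw [hT, le_div_iff₀ hkpos]
  linarith [key]
end

section
/- Let k ≥ 1, let y₁,…,y_k be nonnegative real numbers with β := ∑_{j=1}^k y_j^{k−1} > 0, and set p_i := y_i^{k−1} / β for each i. Then p_i ≥ 0, ∑_{i=1}^k p_i = 1, and for every l ∈ {1,…,k}: (1 − p_l) · y_l ≤ (1 − 1/k) · ∑_{i=1}^k p_i y_i. -/
/-! With `m = k - 1`, `β = ∑ y_j^m` and `S = ∑ y_j^(m+1)`, the inequality for `l` is
`(m+1) (β y_l - y_l^(m+1)) ≤ m S`. It is the sum over `i` of the weighted AM-GM inequalities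
`(m+1) y_i^m y_l ≤ m y_i^(m+1) + y_l^(m+1)`, of which there are exactly `k = m + 1`. -/

open Finset

theorem add_one_mul_pow_mul_le {R : Type*} [CommRing R] [LinearOrder R] [IsStrictOrderedRing R]
    (m : ℕ) {a b : R} (ha : 0 ≤ a) (hb : 0 ≤ b) :
    (m + 1) * (a ^ m * b) ≤ m * a ^ (m + 1) + b ^ (m + 1) := by
  induction m with
  | zero => simp
  | succ n ih =>
    have h1 := mul_le_mul_of_nonneg_left ih ha
    have h2 : 0 ≤ (a - b) * (a ^ (n + 1) - b ^ (n + 1)) := by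
      rcases le_total a b with h | h
      · exact mul_nonneg_of_nonpos_of_nonpos (sub_nonpos.2 h)
          (sub_nonpos.2 (pow_le_pow_left₀ ha h _))
      · exact mul_nonneg (sub_nonneg.2 h) (sub_nonneg.2 (pow_le_pow_left₀ hb h _))
    push_cast
    simp only [pow_succ] at h1 h2 ⊢
    nlinarith

theorem add_one_mul_sum_pow_mul_le {ι : Type*} [Fintype ι] (m : ℕ) {y : ι → ℝ}
    (hy : ∀ i, 0 ≤ y i) {b : ℝ} (hb : 0 ≤ b) :
    (m + 1) * ((∑ i, y i ^ m) * b) ≤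
      m * ∑ i, y i ^ (m + 1) + Fintype.card ι * b ^ (m + 1) := by
  have := sum_le_sum fun i (_ : i ∈ univ) => add_one_mul_pow_mul_le m (hy i) hb
  simpa [sum_add_distrib, ← mul_sum, ← sum_mul, mul_assoc] using this

theorem one_sub_div_sum_pow_mul_le {ι : Type*} [Fintype ι] {m : ℕ}
    (hcard : Fintype.card ι = m + 1) {y : ι → ℝ} (hy : ∀ i, 0 ≤ y i)
    (hβ : 0 < ∑ j, y j ^ m) (l : ι) :
    (1 - y l ^ m / ∑ j, y j ^ m) * y l ≤
      (1 - 1 / (m + 1 : ℝ)) * ∑ i, (y i ^ m / ∑ j, y j ^ m) * y i := by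
  have key := add_one_mul_sum_pow_mul_le m hy (hy l)
  rw [hcard] at key
  push_cast at key
  simp only [div_mul_eq_mul_div, ← pow_succ, ← sum_div]
  rw [one_sub_div hβ.ne', div_mul_eq_mul_div, mul_div_assoc', div_le_div_iff_of_pos_right hβ,
    one_sub_div (by positivity), add_sub_cancel_right, div_mul_eq_mul_div,
    le_div_iff₀ (by positivity)]
  linear_combination key

theorem power_distribution_feasible_general
    (k : ℕ) (y : Fin k → ℝ) (hy : ∀ i, 0 ≤ y i)
    (hβ : 0 < ∑ j, (y j) ^ (k - 1)) :
    (∀ i, 0 ≤ (y i) ^ (k - 1) / ∑ j, (y j) ^ (k - 1)) ∧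
    (∑ i, (y i) ^ (k - 1) / ∑ j, (y j) ^ (k - 1)) = 1 ∧
    ∀ l, (1 - (y l) ^ (k - 1) / ∑ j, (y j) ^ (k - 1)) * y l ≤
      (1 - 1 / (k : ℝ)) * ∑ i, ((y i) ^ (k - 1) / ∑ j, (y j) ^ (k - 1)) * y i := by
  refine ⟨fun i => div_nonneg (pow_nonneg (hy i) _) hβ.le, by rw [← sum_div, div_self hβ.ne'], ?_⟩
  rcases k with _ | m
  · simp at hβ
  simpa using one_sub_div_sum_pow_mul_le (Fintype.card_fin (m + 1)) hy hβ

/-- Let `k ≥ 1`, `y₁,…,y_k ≥ 0` with `β := ∑_j y_j^{k−1} > 0`, and set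
`p_i := y_i^{k−1} / β`. Then `p_i ≥ 0`, `∑_i p_i = 1`, and for every `l`:
`(1 − p_l) · y_l ≤ (1 − 1/k) · ∑_i p_i y_i`. -/
theorem power_distribution_feasible
    (k : ℕ) (hk : 1 ≤ k) (y : Fin k → ℝ) (hy : ∀ i, 0 ≤ y i)
    (hβ : 0 < ∑ j, (y j) ^ (k - 1)) :
    (∀ i, 0 ≤ (y i) ^ (k - 1) / ∑ j, (y j) ^ (k - 1)) ∧
    (∑ i, (y i) ^ (k - 1) / ∑ j, (y j) ^ (k - 1)) = 1 ∧
    ∀ l, (1 - (y l) ^ (k - 1) / ∑ j, (y j) ^ (k - 1)) * y l ≤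
      (1 - 1 / (k : ℝ)) * ∑ i, ((y i) ^ (k - 1) / ∑ j, (y j) ^ (k - 1)) * y i :=
  power_distribution_feasible_general k y hy hβ
end

section
/- Let k, m ≥ 1, let q : Fin m → ℝ be nonnegative with ∑_s q(s) = 1, and let y : Fin m → Fin k → ℝ be nonnegative. Then there exists p : Fin m → Fin k → ℝ such that p(s,i) ≥ 0 for all s, i; ∑_{i=1}^k p(s,i) = 1 for every s; and for every l ∈ {1,…,k}: (1 − 1/k) · ∑_s q(s) ∑_{i=1}^k p(s,i) y(s,i) ≥ ∑_s q(s) (1 − p(s,l)) y(s,l). In particular, the feasible region of the linear program used in the derandomized algorithm is nonempty. -/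
/-!
The constraints decouple over `s`, so it suffices to find, for each nonnegative `y : ι → ℝ`
with `|ι| = k`, a distribution `p` with `(1 - p l) y l ≤ (1 - 1/k) ∑ i, p i y i` for every `l`.
Take `p i ∝ y i ^ (k - 1)` (uniform if `y = 0`); after clearing denominators the inequality is
the sum over `i` of Young's inequality `k b^(k-1) a ≤ a^k + (k-1) b^k` with `a = y l`, `b = y i`.
-/

open Finset

theorem succ_mul_pow_mul_le_pow_succ_add (n : ℕ) {a b : ℝ} (ha : 0 ≤ a) (hb : 0 ≤ b) :
    (n + 1) * (b ^ n * a) ≤ a ^ (n + 1) + n * b ^ (n + 1) := by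
  rcases hb.eq_or_lt with rfl | hb
  · rcases n with _ | n
    · simp
    · simp only [zero_pow n.succ_ne_zero, zero_mul, mul_zero]
      positivity
  · have bernoulli :=
      one_add_mul_sub_le_pow (a := a / b) (by linarith [div_nonneg ha hb.le]) (n + 1)
    rw [div_pow, le_div_iff₀ (by positivity)] at bernoulli
    have expand : (1 + ((n + 1 : ℕ) : ℝ) * (a / b - 1)) * b ^ (n + 1)
        = (n + 1) * (b ^ n * a) - n * b ^ (n + 1) := by
      push_cast
      field_simp
      ring
    linarith

theorem succ_mul_sum_pow_mul_le {ι : Type*} [Fintype ι] (n : ℕ) {y : ι → ℝ}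
    (hy : ∀ i, 0 ≤ y i) (l : ι) :
    (n + 1) * ((∑ i, y i ^ n) * y l) ≤
      Fintype.card ι * y l ^ (n + 1) + n * ∑ i, y i ^ (n + 1) :=
  calc (n + 1) * ((∑ i, y i ^ n) * y l) = ∑ i, (n + 1) * (y i ^ n * y l) := by
        rw [sum_mul, mul_sum]
    _ ≤ ∑ i, (y l ^ (n + 1) + n * y i ^ (n + 1)) :=
        sum_le_sum fun i _ => succ_mul_pow_mul_le_pow_succ_add n (hy l) (hy i)
    _ = Fintype.card ι * y l ^ (n + 1) + n * ∑ i, y i ^ (n + 1) := by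
        rw [sum_add_distrib, sum_const, card_univ, nsmul_eq_mul, mul_sum]

theorem exists_prob_one_sub_mul_le {ι : Type*} [Fintype ι] [Nonempty ι] {y : ι → ℝ}
    (hy : ∀ i, 0 ≤ y i) :
    ∃ p : ι → ℝ, (∀ i, 0 ≤ p i) ∧ ∑ i, p i = 1 ∧
      ∀ l, (1 - p l) * y l ≤ (1 - 1 / Fintype.card ι) * ∑ i, p i * y i := by
  obtain ⟨n, hn⟩ : ∃ n, Fintype.card ι = n + 1 :=
    Nat.exists_eq_succ_of_ne_zero Fintype.card_ne_zero
  rcases (sum_nonneg fun i _ => pow_nonneg (hy i) n : 0 ≤ ∑ i, y i ^ n).eq_or_lt with hQ | hQ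
  · have hy0 : ∀ i, y i = 0 := fun i => by
      have := (sum_eq_zero_iff_of_nonneg fun j _ => pow_nonneg (hy j) n).mp hQ.symm i
        (mem_univ i)
      exact pow_eq_zero_iff n.succ_ne_zero |>.mp (by rw [pow_succ, this, zero_mul])
    exact ⟨fun _ => 1 / Fintype.card ι, fun _ => by positivity, by simp,
      fun l => by simp [hy0]⟩
  · refine ⟨fun i => y i ^ n / ∑ j, y j ^ n, fun i => div_nonneg (pow_nonneg (hy i) n) hQ.le,
      by rw [← sum_div, div_self hQ.ne'], fun l => ?_⟩
    have key := succ_mul_sum_pow_mul_le n hy l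
    simp only [div_mul_eq_mul_div, ← sum_div, ← pow_succ]
    rw [hn] at key ⊢
    push_cast at key ⊢
    field_simp
    linear_combination key

theorem derandomized_lp_feasible_general
    (k m : ℕ) (hk : 1 ≤ k)
    (q : Fin m → ℝ) (hq : ∀ s, 0 ≤ q s)
    (y : Fin m → Fin k → ℝ) (hy : ∀ s i, 0 ≤ y s i) :
    ∃ p : Fin m → Fin k → ℝ,
      (∀ s i, 0 ≤ p s i) ∧
      (∀ s, ∑ i, p s i = 1) ∧
      ∀ l, ∑ s, q s * ((1 - p s l) * y s l) ≤
        (1 - 1 / (k : ℝ)) * ∑ s, q s * ∑ i, p s i * y s i := by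
  have : Nonempty (Fin k) := ⟨⟨0, hk⟩⟩
  choose p hp_nonneg hp_sum hp using fun s => exists_prob_one_sub_mul_le (hy s)
  refine ⟨p, hp_nonneg, hp_sum, fun l => ?_⟩
  calc ∑ s, q s * ((1 - p s l) * y s l)
      ≤ ∑ s, q s * ((1 - 1 / (k : ℝ)) * ∑ i, p s i * y s i) :=
        sum_le_sum fun s _ => mul_le_mul_of_nonneg_left (by simpa using hp s l) (hq s)
    _ = (1 - 1 / (k : ℝ)) * ∑ s, q s * ∑ i, p s i * y s i := by
        rw [mul_sum]
        simp_rw [mul_left_comm]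

/-- Let `k, m ≥ 1`, `q : Fin m → ℝ` nonnegative with `∑ q = 1`, and
`y : Fin m → Fin k → ℝ` nonnegative. Then there exists `p` with `p(s,i) ≥ 0`,
`∑_i p(s,i) = 1` for every `s`, and for every `l`:
`(1 − 1/k) ∑_s q(s) ∑_i p(s,i) y(s,i) ≥ ∑_s q(s)(1 − p(s,l)) y(s,l)`.
In particular, the LP of the derandomized algorithm is feasible. -/
theorem derandomized_lp_feasible
    (k m : ℕ) (hk : 1 ≤ k) (hm : 1 ≤ m)
    (q : Fin m → ℝ) (hq : ∀ s, 0 ≤ q s) (hq1 : ∑ s, q s = 1)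
    (y : Fin m → Fin k → ℝ) (hy : ∀ s i, 0 ≤ y s i) :
    ∃ p : Fin m → Fin k → ℝ,
      (∀ s i, 0 ≤ p s i) ∧
      (∀ s, ∑ i, p s i = 1) ∧
      ∀ l, ∑ s, q s * ((1 - p s l) * y s l) ≤
        (1 - 1 / (k : ℝ)) * ∑ s, q s * ∑ i, p s i * y s i :=
  derandomized_lp_feasible_general k m hk q hq y hy
end

section
/- Let k, m ≥ 1, let q : Fin m → ℝ be nonnegative with ∑_s q(s) = 1, and let y : Fin m → Fin k → ℝ be nonnegative. Let P ⊆ (Fin m × Fin k → ℝ) be the polytope of all p satisfying: p(s,i) ≥ 0 for all s, i; ∑_{i=1}^k p(s,i) = 1 for every s; and for every l ∈ {1,…,k}: (1 − 1/k) · ∑_s q(s) ∑_{i=1}^k p(s,i) y(s,i) ≥ ∑_s q(s) (1 − p(s,l)) y(s,l). Then every extreme point p of P has at most m + k nonzero coordinates, i.e. the cardinality of {(s,i) : p(s,i) ≠ 0} is at most m + k. -/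
/-!
A point `p` of the polytope is cut out by the sign constraints `p ≥ 0` together with
`m + k` linear forms: the `m` row sums and the `k` linear forms whose values enter the
inequality constraints. If the support of `p` had more than `m + k` points, some nonzero
direction `v` supported on it would lie in the kernel of all these forms; then `p ± t v`
stays in the polytope for small `t`, so `p` is not extreme.
-/

open Filter Topology Module

theorem eq_zero_of_add_mem_of_sub_mem_of_mem_extremePoints {E : Type*} [AddCommGroup E]
    [Module ℝ E] {A : Set E} {x v : E} (hx : x ∈ A.extremePoints ℝ) (hadd : x + v ∈ A)
    (hsub : x - v ∈ A) : v = 0 :=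
  add_eq_left.1 (hx.2 hadd hsub (mem_openSegment_add_sub x v))

theorem exists_ne_zero_apply_eq_zero_of_finrank_lt_ncard_support {ι F : Type*} [Fintype ι]
    [AddCommGroup F] [Module ℝ F] [FiniteDimensional ℝ F] (L : (ι → ℝ) →ₗ[ℝ] F) {x : ι → ℝ}
    (h : finrank ℝ F < (Function.support x).ncard) :
    ∃ v, v ≠ 0 ∧ L v = 0 ∧ ∀ i, x i = 0 → v i = 0 := by
  classical
  let restrict := LinearMap.funLeft ℝ ℝ (Subtype.val : ↥(Function.support x)ᶜ → ι)
  have hdim : finrank ℝ (F × (↥(Function.support x)ᶜ → ℝ)) < finrank ℝ (ι → ℝ) := by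
    rw [finrank_prod, finrank_fintype_fun_eq_card, finrank_fintype_fun_eq_card,
      ← Nat.card_eq_fintype_card, ← Nat.card_eq_fintype_card, Nat.card_coe_set_eq,
      ← Set.ncard_add_ncard_compl (Function.support x)]
    omega
  obtain ⟨v, hv, hv0⟩ := Submodule.exists_mem_ne_zero_of_ne_bot
    (LinearMap.ker_ne_bot_of_finrank_lt (f := L.prod restrict) hdim)
  obtain ⟨hLv, hres⟩ := Prod.ext_iff.1 hv
  exact ⟨v, hv0, hLv, fun i hi => congrFun hres ⟨i, Function.notMem_support.2 hi⟩⟩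

theorem eventually_nonneg_add_mul {ι : Type*} [Finite ι] {x v : ι → ℝ} (hx : ∀ i, 0 ≤ x i)
    (hv : ∀ i, x i = 0 → v i = 0) : ∀ᶠ t in 𝓝 (0 : ℝ), ∀ i, 0 ≤ x i + t * v i := by
  refine eventually_all.2 fun i => ?_
  rcases (hx i).eq_or_lt with hxi | hxi
  · simp [← hxi, hv i hxi.symm]
  · have hcont : Continuous fun t : ℝ => x i + t * v i := by fun_prop
    have := hcont.tendsto 0
    simp only [zero_mul, add_zero] at this
    exact (this.eventually_const_lt hxi).mono fun _ h => h.le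

theorem ncard_support_le_finrank_of_mem_extremePoints {ι F : Type*} [Fintype ι]
    [AddCommGroup F] [Module ℝ F] [FiniteDimensional ℝ F] (L : (ι → ℝ) →ₗ[ℝ] F) (B : Set F)
    {x : ι → ℝ} (hx : x ∈ ({x | ∀ i, 0 ≤ x i} ∩ L ⁻¹' B).extremePoints ℝ) :
    (Function.support x).ncard ≤ finrank ℝ F := by
  by_contra! h
  obtain ⟨v, hv0, hLv, hvx⟩ := exists_ne_zero_apply_eq_zero_of_finrank_lt_ncard_support L h
  obtain ⟨hxpos, hxB⟩ := hx.1
  have hmem : ∀ᶠ t in 𝓝 (0 : ℝ), x + t • v ∈ ({x | ∀ i, 0 ≤ x i} ∩ L ⁻¹' B) := by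
    refine (eventually_nonneg_add_mul hxpos hvx).mono fun t ht => ⟨ht, ?_⟩
    simpa [hLv] using hxB
  have hmem_neg := (continuous_neg.tendsto' 0 0 neg_zero).eventually hmem
  obtain ⟨t, ⟨hadd, hsub⟩, ht0⟩ := (((hmem.and hmem_neg).filter_mono
    (nhdsWithin_le_nhds (s := {0}ᶜ))).and self_mem_nhdsWithin).exists
  rw [neg_smul, ← sub_eq_add_neg] at hsub
  exact hv0 ((smul_eq_zero.1
    (eq_zero_of_add_mem_of_sub_mem_of_mem_extremePoints hx hadd hsub)).resolve_left ht0)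

variable {σ κ : Type*} [Fintype σ] [Fintype κ]

def lpConstraintMap (q : σ → ℝ) (y : σ → κ → ℝ) (c : ℝ) :
    (σ × κ → ℝ) →ₗ[ℝ] (σ → ℝ) × (κ → ℝ) where
  toFun p := (fun s => ∑ i, p (s, i),
    fun l => c * ∑ s, q s * ∑ i, p (s, i) * y s i + ∑ s, q s * (p (s, l) * y s l))
  map_add' p p' := by
    ext <;> simp [add_mul, mul_add, Finset.sum_add_distrib]; ring
  map_smul' a p := by
    ext <;> simp [Finset.mul_sum, mul_add, mul_assoc, mul_left_comm]

theorem lp_polytope_eq_inter_preimage (q : σ → ℝ) (y : σ → κ → ℝ) (c : ℝ) :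
    {p : σ × κ → ℝ | (∀ si, 0 ≤ p si) ∧ (∀ s, ∑ i, p (s, i) = 1) ∧
      ∀ l, ∑ s, q s * ((1 - p (s, l)) * y s l) ≤ c * ∑ s, q s * ∑ i, p (s, i) * y s i} =
    {p | ∀ si, 0 ≤ p si} ∩
      lpConstraintMap q y c ⁻¹' {b | b.1 = 1 ∧ ∀ l, ∑ s, q s * y s l ≤ b.2 l} := by
  ext p
  have hsplit : ∀ l, ∑ s, q s * ((1 - p (s, l)) * y s l) =
      ∑ s, q s * y s l - ∑ s, q s * (p (s, l) * y s l) := fun l => by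
    rw [← Finset.sum_sub_distrib]
    exact Finset.sum_congr rfl fun s _ => by ring
  simp only [Set.mem_ofPred_eq, Set.mem_inter_iff, Set.mem_preimage, lpConstraintMap,
    LinearMap.coe_mk, AddHom.coe_mk, funext_iff, Pi.one_apply, hsplit, sub_le_iff_le_add]

theorem derandomized_lp_extremePoint_support_general
    (k m : ℕ)
    (q : Fin m → ℝ)
    (y : Fin m → Fin k → ℝ)
    (P : Set (Fin m × Fin k → ℝ))
    (hP : P = {p | (∀ si, 0 ≤ p si) ∧
      (∀ s, ∑ i, p (s, i) = 1) ∧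
      ∀ l, ∑ s, q s * ((1 - p (s, l)) * y s l) ≤
        (1 - 1 / (k : ℝ)) * ∑ s, q s * ∑ i, p (s, i) * y s i})
    (p : Fin m × Fin k → ℝ) (hp : p ∈ Set.extremePoints ℝ P) :
    {si : Fin m × Fin k | p si ≠ 0}.ncard ≤ m + k := by
  rw [hP, lp_polytope_eq_inter_preimage] at hp
  exact (ncard_support_le_finrank_of_mem_extremePoints _ _ hp).trans_eq (by simp [finrank_prod])

/-- Every extreme point of the LP polytope of the derandomized algorithm has
at most `m + k` nonzero coordinates. -/
theorem derandomized_lp_extremePoint_support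
    (k m : ℕ) (hk : 1 ≤ k) (hm : 1 ≤ m)
    (q : Fin m → ℝ) (hq : ∀ s, 0 ≤ q s) (hq1 : ∑ s, q s = 1)
    (y : Fin m → Fin k → ℝ) (hy : ∀ s i, 0 ≤ y s i)
    (P : Set (Fin m × Fin k → ℝ))
    (hP : P = {p | (∀ si, 0 ≤ p si) ∧
      (∀ s, ∑ i, p (s, i) = 1) ∧
      ∀ l, ∑ s, q s * ((1 - p (s, l)) * y s l) ≤
        (1 - 1 / (k : ℝ)) * ∑ s, q s * ∑ i, p (s, i) * y s i})
    (p : Fin m × Fin k → ℝ) (hp : p ∈ Set.extremePoints ℝ P) :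
    {si : Fin m × Fin k | p si ≠ 0}.ncard ≤ m + k :=
  derandomized_lp_extremePoint_support_general k m q y P hP p hp
end

section
/- Let f : (V → Fin (k+1)) → ℝ be monotone and k-submodular, let o : V → Fin (k+1) satisfy o(e) ≠ 0 for every e ∈ V, let s : V → Fin (k+1) and e ∈ V with s(e) = 0, and let p₁,…,p_k be nonnegative reals with ∑_{i=1}^k p_i = 1 satisfying, for every l ∈ {1,…,k}: (1 − 1/k) · ∑_{i=1}^k p_i (f(s_{e,i}) − f(s)) ≥ (1 − p_l) · (f(s_{e,l}) − f(s)). Then f((o ⊔ s) ⊔ s) − ∑_{i=1}^k p_i f((o ⊔ s_{e,i}) ⊔ s_{e,i}) ≤ (1 − 1/k) · (∑_{i=1}^k p_i f(s_{e,i}) − f(s)). -/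
variable {V : Type*} [Fintype V] [DecidableEq V] {k : ℕ}

lemma ksub_orthant {V : Type*} [Fintype V] [DecidableEq V] {k : ℕ}
    (f : (V → Fin (k+1)) → ℝ) (hf : KSubmodular f) : OrthantSubmodular f := by
  intro x y e i hxy hy hi
  have hxe : x e = 0 := by
    rcases hxy e with h | h
    · exact h
    · exact h.trans hy
  have h := hf (Function.update x e i) y
  have h1 : kinf (Function.update x e i) y = x := by
    funext c
    by_cases hc : c = e
    · subst hc
      simp only [kinf, Function.update_self, hy, hxe]
      rw [if_neg hi]
    · simp only [kinf, Function.update_of_ne hc]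
      rcases hxy c with h0 | h0
      · by_cases hxy' : x c = y c
        · rw [if_pos hxy']
        · rw [if_neg hxy', h0]
      · rw [if_pos h0]
  have h2 : ksup (Function.update x e i) y = Function.update y e i := by
    funext c
    by_cases hc : c = e
    · subst hc
      simp [ksup, Function.update_self, hy]
    · simp only [ksup, Function.update_of_ne hc]
      rcases hxy c with h0 | h0
      · by_cases hy0 : y c = 0
        · rw [if_pos (Or.inl hy0), h0, hy0]
        · rw [if_neg, if_pos h0]
          push_neg
          exact ⟨hy0, by rw [h0]; exact hy0⟩
      · rw [if_pos (Or.inr h0.symm), h0]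
  rw [h1, h2] at h
  linarith

lemma ksup_ksup_eq {V : Type*} [Fintype V] [DecidableEq V] {k : ℕ}
    (o s : V → Fin (k+1)) (ho : ∀ e, o e ≠ 0) :
    ksup (ksup o s) s = fun c => if s c = 0 then o c else s c := by
  funext c
  have hu : ksup o s c = if s c = 0 ∨ s c = o c then o c else if o c = 0 then s c else 0 :=
    rfl
  show (if s c = 0 ∨ s c = ksup o s c then ksup o s c
      else if ksup o s c = 0 then s c else 0) = _
  by_cases h0 : s c = 0
  · have hu' : ksup o s c = o c := by rw [hu, if_pos (Or.inl h0)]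
    rw [hu', if_pos (Or.inl h0), if_pos h0]
  · by_cases heq : s c = o c
    · have hu' : ksup o s c = o c := by rw [hu, if_pos (Or.inr heq)]
      rw [hu', if_pos (Or.inr heq), if_neg h0, heq]
    · have hu' : ksup o s c = 0 := by
        rw [hu, if_neg (by push_neg; exact ⟨h0, heq⟩), if_neg (ho c)]
      rw [hu', if_neg (by push_neg; exact ⟨h0, h0⟩), if_pos rfl, if_neg h0]

/-- The single-element step inequality of the deterministic algorithm: if `f` is
monotone and `k`-submodular, `o(e) ≠ 0` everywhere, `s(e) = 0`, and the
nonnegative weights `p₁,…,p_k` summing to `1` satisfy the LP constraints, then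
`f((o ⊔ s) ⊔ s) − ∑_i p_i f((o ⊔ s_{e,i}) ⊔ s_{e,i})
  ≤ (1 − 1/k)(∑_i p_i f(s_{e,i}) − f(s))`. -/
theorem step_inequality
    (hk : 1 ≤ k) (f : (V → Fin (k+1)) → ℝ)
    (hmono : KMonotone f) (hf : KSubmodular f)
    (o : V → Fin (k+1)) (ho : ∀ e, o e ≠ 0)
    (s : V → Fin (k+1)) (e : V) (hse : s e = 0)
    (p : Fin k → ℝ) (hp : ∀ i, 0 ≤ p i) (hp1 : ∑ i, p i = 1)
    (hlp : ∀ l : Fin k,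
      (1 - p l) * (f (Function.update s e l.succ) - f s) ≤
        (1 - 1 / (k : ℝ)) * ∑ i, p i * (f (Function.update s e i.succ) - f s)) :
    f (ksup (ksup o s) s) -
        ∑ i, p i * f (ksup (ksup o (Function.update s e i.succ))
          (Function.update s e i.succ)) ≤
      (1 - 1 / (k : ℝ)) * ((∑ i, p i * f (Function.update s e i.succ)) - f s) := by
  classical
  have horth := ksub_orthant f hf
  set t : V → Fin (k+1) := fun c => if s c = 0 then o c else s c with ht
  have hte : t e = o e := by simp [ht, hse]
  obtain ⟨l, hl⟩ : ∃ l : Fin k, o e = l.succ := by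
    refine ⟨(o e).pred (ho e), ?_⟩
    rw [Fin.succ_pred]
  have hti : ∀ i : Fin k,
      ksup (ksup o (Function.update s e i.succ)) (Function.update s e i.succ)
        = Function.update t e i.succ := by
    intro i
    rw [ksup_ksup_eq o _ ho]
    funext c
    by_cases hc : c = e
    · subst hc
      simp [Fin.succ_ne_zero]
    · simp [Function.update_of_ne hc, ht]
  rw [ksup_ksup_eq o s ho, ← ht]
  simp only [hti]
  set t0 : V → Fin (k+1) := Function.update t e 0 with ht0
  have hst0 : KPrec s t0 := by
    intro c
    by_cases hc : c = e
    · subst hc; exact Or.inl hse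
    · rw [ht0, Function.update_of_ne hc]
      by_cases h0 : s c = 0
      · exact Or.inl h0
      · exact Or.inr (by simp [ht, h0])
  have horth' : f t - f t0 ≤ f (Function.update s e l.succ) - f s := by
    have := horth s t0 e (o e) hst0 (by simp [ht0]) (ho e)
    rw [hl] at this
    have hupd : Function.update t0 e l.succ = t := by
      funext c
      by_cases hc : c = e
      · subst hc; rw [Function.update_self, hte, hl]
      · rw [Function.update_of_ne hc, ht0, Function.update_of_ne hc]
    rw [hupd] at this
    exact this
  have hmono' : ∀ i : Fin k, f t0 ≤ f (Function.update t e i.succ) := by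
    intro i
    apply hmono
    intro c
    by_cases hc : c = e
    · subst hc; exact Or.inl (by simp [ht0])
    · rw [ht0, Function.update_of_ne hc, Function.update_of_ne hc]
      exact Or.inr rfl
  have htl : Function.update t e l.succ = t := by
    funext c
    by_cases hc : c = e
    · subst hc; rw [Function.update_self, hte, hl]
    · rw [Function.update_of_ne hc]
  set Δ : ℝ := f (Function.update s e l.succ) - f s with hΔ
  have key : ∀ i : Fin k,
      p i * (f t - f (Function.update t e i.succ)) ≤
        if i = l then 0 else p i * Δ := by
    intro i
    by_cases hil : i = l
    · subst hil
      rw [htl, if_pos rfl, sub_self, mul_zero]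
    · rw [if_neg hil]
      apply mul_le_mul_of_nonneg_left _ (hp i)
      have := hmono' i
      linarith
  have hsum1 : f t - ∑ i, p i * f (Function.update t e i.succ)
      = ∑ i, p i * (f t - f (Function.update t e i.succ)) := by
    simp only [mul_sub]
    rw [Finset.sum_sub_distrib, ← Finset.sum_mul, hp1, one_mul]
  have hsum2 : ∑ i, (if i = l then (0:ℝ) else p i * Δ) = (1 - p l) * Δ := by
    have : ∀ i : Fin k, (if i = l then (0:ℝ) else p i * Δ)
        = p i * Δ - (if i = l then p i * Δ else 0) := by
      intro i; by_cases hil : i = l <;> simp [hil]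
    rw [Finset.sum_congr rfl (fun i _ => this i), Finset.sum_sub_distrib]
    simp only [Finset.sum_ite_eq', Finset.mem_univ, if_true]
    rw [← Finset.sum_mul, hp1]
    ring
  have hsum3 : ∑ i, p i * (f (Function.update s e i.succ) - f s)
      = (∑ i, p i * f (Function.update s e i.succ)) - f s := by
    simp only [mul_sub]
    rw [Finset.sum_sub_distrib, ← Finset.sum_mul, hp1, one_mul]
  calc f t - ∑ i, p i * f (Function.update t e i.succ)
      = ∑ i, p i * (f t - f (Function.update t e i.succ)) := hsum1
    _ ≤ ∑ i, (if i = l then (0:ℝ) else p i * Δ) :=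
        Finset.sum_le_sum (fun i _ => key i)
    _ = (1 - p l) * Δ := hsum2
    _ ≤ (1 - 1 / (k : ℝ)) * ∑ i, p i * (f (Function.update s e i.succ) - f s) :=
        hlp l
    _ = (1 - 1 / (k : ℝ)) * ((∑ i, p i * f (Function.update s e i.succ)) - f s) := by
        rw [hsum3]
end
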